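/- The expectation semiring S ⊕̃ M is présimplifiable if and only if V(M) = M and both S and M are présimplifiable. Here a semiring S is présimplifiable if st = t implies s is a unit or t = 0, and an S-semimodule M is présimplifiable if sm = m implies s is a unit or m = 0. -/

import Mathlib

noncomputable instance expOpp {S M : Type*} [CommSemiring S] [AddCommMonoid M] [Module S M] :
    Module Sᵐᵒᵖ M :=
  Module.compHom M ((RingHom.id S).fromOpposite mul_comm)

instance expCentral {S M : Type*} [CommSemiring S] [AddCommMonoid M] [Module S M] :
    IsCentralScalar S M :=
  ⟨fun _ _ => rfl⟩

/-! The units of `S ⊕̃ M` are the pairs `(s, m)` with `s` a unit of `S` and `m` additively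
invertible. Testing présimplifiability on `inl s * inl t`, `inl s * inr m` and
`(1 + inr m) * inr n = inr n` (as `inr m * inr n = 0`) yields the three conditions, the last one
since `n ≠ 0` forces `1 + inr m` to be a unit. Conversely `x * t = t` reads `x₀ t₀ = t₀` on the
first component and, once `t₀ = 0`, `x₀ • t₁ = t₁` on the second; when `x₀` is a unit, so is `x`
because every element of `M` is additively invertible. -/

namespace TrivSqZeroExt

variable {R M : Type*} [CommSemiring R] [AddCommMonoid M] [Module R M] [Module Rᵐᵒᵖ M]
  [IsCentralScalar R M]

theorem isUnit_iff_isUnit_fst_and_isAddUnit_snd {x : TrivSqZeroExt R M} :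
    IsUnit x ↔ IsUnit x.fst ∧ IsAddUnit x.snd := by
  constructor
  · rintro ⟨⟨x, y, hxy, -⟩, rfl⟩
    have hfst : x.fst * y.fst = 1 := by rw [← fst_mul, hxy, fst_one]
    have hsnd : x.fst • y.snd + y.fst • x.snd = 0 := by
      simpa [op_smul_eq_smul] using congrArg snd hxy
    have hneg : IsAddUnit (y.fst • x.snd) :=
      isAddUnit_iff_exists_neg.mpr ⟨_, add_comm (x.fst • y.snd) _ ▸ hsnd⟩
    refine ⟨isUnit_iff_exists_inv.mpr ⟨_, hfst⟩, ?_⟩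
    simpa [smul_smul, hfst] using hneg.smul_left x.fst
  · rintro ⟨hfst, hsnd⟩
    obtain ⟨r, hr⟩ := hfst.exists_right_inv
    obtain ⟨n, hn⟩ := isAddUnit_iff_exists_neg.mp hsnd
    -- the ring formula `x⁻¹ = inl r - inr ((r * r) • x.snd)`, with `n` standing for `-x.snd`
    refine isUnit_iff_exists_inv.mpr ⟨inl r + inr ((r * r) • n), ext ?_ ?_⟩
    · simp [hr]
    · simp [op_smul_eq_smul, smul_smul, ← mul_assoc, hr, ← smul_add, add_comm n, hn]

theorem isAddUnit_of_presimplifiable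
    (h : ∀ x t : TrivSqZeroExt R M, x * t = t → IsUnit x ∨ t = 0) (m : M) : IsAddUnit m := by
  rcases subsingleton_or_nontrivial M with hM | hM
  · exact Subsingleton.elim 0 m ▸ isAddUnit_zero
  obtain ⟨n, hn⟩ := exists_ne (0 : M)
  have hmul : (1 + inr m : TrivSqZeroExt R M) * inr n = inr n := by
    rw [add_mul, one_mul, inr_mul_inr, add_zero]
  rcases h _ _ hmul with hu | h0
  · simpa using (isUnit_iff_isUnit_fst_and_isAddUnit_snd.mp hu).2
  · exact absurd (by simpa using congrArg snd h0) hn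

theorem presimplifiable_fst_of_presimplifiable
    (h : ∀ x t : TrivSqZeroExt R M, x * t = t → IsUnit x ∨ t = 0) (s t : R) (hst : s * t = t) :
    IsUnit s ∨ t = 0 := by
  rcases h (inl s) (inl t) (by rw [← inl_mul, hst]) with hu | h0
  · exact .inl (isUnit_iff_isUnit_fst_and_isAddUnit_snd.mp hu |>.1)
  · exact .inr (by simpa using congrArg fst h0)

theorem presimplifiable_smul_of_presimplifiable
    (h : ∀ x t : TrivSqZeroExt R M, x * t = t → IsUnit x ∨ t = 0) (s : R) (m : M)
    (hsm : s • m = m) : IsUnit s ∨ m = 0 := by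
  rcases h (inl s) (inr m) (by rw [inl_mul_inr, hsm]) with hu | h0
  · exact .inl (isUnit_iff_isUnit_fst_and_isAddUnit_snd.mp hu |>.1)
  · exact .inr (by simpa using congrArg snd h0)

theorem presimplifiable_of_presimplifiable_fst_smul (hV : ∀ m : M, IsAddUnit m)
    (hR : ∀ s t : R, s * t = t → IsUnit s ∨ t = 0)
    (hM : ∀ (s : R) (m : M), s • m = m → IsUnit s ∨ m = 0)
    (x t : TrivSqZeroExt R M) (hxt : x * t = t) : IsUnit x ∨ t = 0 := by
  have isUnit_of_fst (hx : IsUnit x.fst) : IsUnit x :=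
    isUnit_iff_isUnit_fst_and_isAddUnit_snd.mpr ⟨hx, hV _⟩
  have hfst : x.fst * t.fst = t.fst := by rw [← fst_mul, hxt]
  rcases hR _ _ hfst with hu | ht
  · exact .inl (isUnit_of_fst hu)
  have hsnd : x.fst • t.snd = t.snd := by simpa [ht] using congrArg snd hxt
  rcases hM _ _ hsnd with hu | hm
  · exact .inl (isUnit_of_fst hu)
  · exact .inr (ext ht hm)

end TrivSqZeroExt

/-- S ⊕̃ M is présimplifiable iff V(M) = M and both S and M are
présimplifiable. -/
theorem stmt19 (S M : Type*) [CommSemiring S] [AddCommMonoid M] [Module S M] :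
    (∀ x t : TrivSqZeroExt S M, x * t = t → IsUnit x ∨ t = 0) ↔
      ((∀ m : M, IsAddUnit m) ∧
        (∀ s t : S, s * t = t → IsUnit s ∨ t = 0) ∧
        (∀ (s : S) (m : M), s • m = m → IsUnit s ∨ m = 0)) :=
  open TrivSqZeroExt in
  ⟨fun h => ⟨isAddUnit_of_presimplifiable h, presimplifiable_fst_of_presimplifiable h,
      presimplifiable_smul_of_presimplifiable h⟩,
    fun ⟨hV, hR, hM⟩ => presimplifiable_of_presimplifiable_fst_smul hV hR hM⟩
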